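/- Let g(h) = 1 + arctan(h). Define the PTVDRK3' angle update factor F(h) = (1/3)(1 + 2·(1/4)(3 + g(h)²)·g(h)). Then F(h) = 1 + h + h²/2 − h³/6 + O(h⁴), and hence e^h − F(h) = (1/6 − (−1/6)) h³ + O(h⁴) = h³/3 + O(h⁴); in particular the coefficient of h³ in F is −1/6 ≠ 1/6, so PTVDRK3' is only second-order accurate. -/

import Mathlib

/-- The PTVDRK3' angle-update factor on the circle for `θ' = θ`. -/
noncomputable def F (h : ℝ) : ℝ :=
  (1 / 3) * (1 + 2 * ((1 / 4) * (3 + (1 + Real.arctan h) ^ 2)) * (1 + Real.arctan h))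

/-!
The stages combine the projected Euler factor `g h = 1 + arctan h` exactly as SSP-RK3 combines
Euler factors `1 + z`, so `F h = T (arctan h)` with `T z = 1 + z + z²/2 + z³/6` the stability
polynomial of SSP-RK3, i.e. the cubic Taylor polynomial of `exp`. The projection replaces the
step `h` by `arctan h = h - h³/3 + O(h⁵)`; since `T' = 1 + O(h)`, this shifts the result by
`-h³/3 + O(h⁴)`, and `exp h - T h = O(h⁴)`.
-/

open Real Finset Set

lemma abs_sub_le_of_hasDerivAt_of_abs_le {f f' : ℝ → ℝ} {x C : ℝ}
    (hf : ∀ t, HasDerivAt f (f' t) t) (hC : ∀ t ∈ uIcc 0 x, |f' t| ≤ C) :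
    |f x - f 0| ≤ C * |x| := by
  simpa using Convex.norm_image_sub_le_of_norm_hasDerivWithin_le
    (fun t _ => (hf t).hasDerivWithinAt) hC (convex_uIcc 0 x) left_mem_uIcc right_mem_uIcc

lemma abs_le_abs_of_mem_uIcc_zero {t x : ℝ} (ht : t ∈ uIcc 0 x) : |t| ≤ |x| := by
  simpa using abs_sub_left_of_mem_uIcc ht

lemma abs_arctan_le (x : ℝ) : |arctan x| ≤ |x| := by
  have := abs_sub_le_of_hasDerivAt_of_abs_le (C := 1) (x := x) hasDerivAt_arctan fun t _ => by
    rw [abs_of_pos (by positivity), div_le_one (by positivity)]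
    nlinarith [sq_nonneg t]
  simpa using this

lemma abs_sub_arctan_sub_cube_le (x : ℝ) : |x - arctan x - x ^ 3 / 3| ≤ |x| ^ 5 := by
  have hderiv (t : ℝ) :
      HasDerivAt (fun t => t - arctan t - t ^ 3 / 3) (-(t ^ 4 / (1 + t ^ 2))) t := by
    refine (((hasDerivAt_id' t).sub (hasDerivAt_arctan t)).sub
      ((hasDerivAt_pow 3 t).div_const 3)).congr_deriv ?_
    have : 1 + t ^ 2 ≠ 0 := by positivity
    field_simp
    ring
  have := abs_sub_le_of_hasDerivAt_of_abs_le (C := |x| ^ 4) (x := x) hderiv fun t ht => by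
    have hxt : |t| ^ 4 ≤ |x| ^ 4 := 
      pow_le_pow_left₀ (abs_nonneg t) (abs_le_abs_of_mem_uIcc_zero ht) 4
    rw [(by decide : Even 4).pow_abs] at hxt
    rw [abs_neg, abs_of_nonneg (by positivity), div_le_iff₀ (by positivity)]
    nlinarith [mul_nonneg (pow_nonneg (abs_nonneg x) 4) (sq_nonneg t)]
  simpa [pow_succ] using this

lemma abs_sub_arctan_le {x : ℝ} (hx : |x| ≤ 1) : |x - arctan x| ≤ 4 / 3 * |x| ^ 3 := by
  have h53 : |x| ^ 5 ≤ |x| ^ 3 := pow_le_pow_of_le_one (abs_nonneg x) hx (by norm_num)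
  calc |x - arctan x| = |(x - arctan x - x ^ 3 / 3) + x ^ 3 / 3| := by ring_nf
    _ ≤ |x| ^ 5 + |x| ^ 3 / 3 := by grw [abs_add_le, abs_sub_arctan_sub_cube_le]; simp [abs_div]
    _ ≤ 4 / 3 * |x| ^ 3 := by linarith

lemma abs_exp_sub_taylor_le {x : ℝ} (hx : |x| ≤ 1) :
    |exp x - ∑ m ∈ range 4, x ^ m / m.factorial| ≤ |x| ^ 4 := by
  have := exp_bound hx (n := 4) (by norm_num)
  norm_num [Nat.factorial] at this
  linarith [pow_nonneg (abs_nonneg x) 4]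

lemma F_eq_sum (h : ℝ) : F h = ∑ m ∈ range 4, arctan h ^ m / m.factorial := by
  simp only [F, sum_range_succ, sum_range_zero, Nat.factorial]
  push_cast
  ring

lemma abs_taylor_sub_taylor_sub_le {x y : ℝ} (hy : |y| ≤ |x|) (hx : |x| ≤ 1) :
    |∑ m ∈ range 4, x ^ m / m.factorial - ∑ m ∈ range 4, y ^ m / m.factorial - (x - y)|
      ≤ 3 / 2 * |x| * |x - y| := by
  have hfactor :
      ∑ m ∈ range 4, x ^ m / m.factorial - ∑ m ∈ range 4, y ^ m / m.factorial - (x - y)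
        = (x - y) * ((x + y) / 2 + (x ^ 2 + x * y + y ^ 2) / 6) := by
    simp only [sum_range_succ, sum_range_zero, Nat.factorial]
    push_cast
    ring
  have hquot : |(x + y) / 2 + (x ^ 2 + x * y + y ^ 2) / 6| ≤ 3 / 2 * |x| := by
    have hsum : |x + y| ≤ 2 * |x| := by linarith [abs_add_le x y]
    have hprod : |x * y| ≤ |x| * |x| := by rw [abs_mul]; gcongr
    have hsq : y ^ 2 ≤ |x| * |x| := by rw [← sq, sq_le_sq]; simpa using hy
    have hxx : |x| * |x| ≤ |x| := mul_le_of_le_one_left (abs_nonneg x) hx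
    rw [abs_le] at hsum hprod ⊢
    constructor <;> nlinarith [abs_mul_abs_self x, sq_nonneg y]
  rw [hfactor, abs_mul, mul_comm]
  gcongr

theorem stmt_15 :
    ∃ C > (0:ℝ), ∃ δ > (0:ℝ), ∀ h : ℝ, |h| ≤ δ →
      |Real.exp h - F h - h ^ 3 / 3| ≤ C * h ^ 4 := by
  refine ⟨4, by norm_num, 1, by norm_num, fun h hh => ?_⟩
  have h4 : h ^ 4 = |h| ^ 4 := ((by decide : Even 4).pow_abs h).symm
  have h5 : |h| ^ 5 ≤ |h| ^ 4 := pow_le_pow_of_le_one (abs_nonneg h) hh (by norm_num)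
  calc |exp h - F h - h ^ 3 / 3|
      = |(exp h - ∑ m ∈ range 4, h ^ m / m.factorial) + (h - arctan h - h ^ 3 / 3)
          + (∑ m ∈ range 4, h ^ m / m.factorial - ∑ m ∈ range 4, arctan h ^ m / m.factorial
              - (h - arctan h))| := by rw [F_eq_sum]; ring_nf
    _ ≤ |h| ^ 4 + |h| ^ 5 + 3 / 2 * |h| * (4 / 3 * |h| ^ 3) := by
        grw [abs_add_le, abs_add_le, abs_exp_sub_taylor_le hh, abs_sub_arctan_sub_cube_le,
          abs_taylor_sub_taylor_sub_le (abs_arctan_le h) hh, abs_sub_arctan_le hh]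
    _ ≤ 4 * h ^ 4 := by rw [h4]; linarith
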